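/- arXiv:1911.00259 — 2 statements merged into one kernel-verified Lean document; each statement's English description precedes it below -/
import Mathlib

section
/- Let C be an extriangulated category with weak kernels. Then a finitely presented functor F ∈ mod C is effaceable if and only if F is isomorphic to a defect, i.e., eff C = def C as subcategories of mod C. In particular, def C is a Serre subcategory of mod C. -/
open CategoryTheory CategoryTheory.Limits Opposite

universe w' w v u

noncomputable section

namespace PaperStmt

variable {C : Type u} [Category.{v} C] [Preadditive C]

/-- The category of right `C`-modules (contravariant functors `C ⥤ Ab`). -/
abbrev Mod (C : Type u) [Category.{v} C] [Preadditive C] := Cᵒᵖ ⥤ AddCommGrpCat.{v}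

/-- A `C`-module `F` is finitely presented if it admits a presentation
`Hom(-,Y) ⟶ Hom(-,X) ⟶ F ⟶ 0`, expressed pointwise:  there are a morphism
`f : Y ⟶ X` and an epimorphism `p : Hom(-,X) ⟶ F` whose kernel is, at every
object `W`, exactly the set of morphisms factoring through `f`. -/
def IsFinitelyPresented (F : Mod C) : Prop :=
  ∃ (Y X : C) (f : Y ⟶ X) (p : preadditiveYoneda.obj X ⟶ F),
    (∀ W : Cᵒᵖ, Function.Surjective (p.app W)) ∧
    (∀ (W : C) (h : W ⟶ X), p.app (op W) h = 0 ↔ ∃ k : W ⟶ Y, k ≫ f = h)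

/-- `C` has weak kernels: every morphism admits a weak kernel. -/
def HasWeakKernels (C : Type u) [Category.{v} C] [Preadditive C] : Prop :=
  ∀ ⦃X Y : C⦄ (f : X ⟶ Y), ∃ (K : C) (g : K ⟶ X), g ≫ f = 0 ∧
    ∀ ⦃W : C⦄ (h : W ⟶ X), h ≫ f = 0 → ∃ t : W ⟶ K, t ≫ g = h

/-- An extriangulated category structure `(E, s)` on an additive category `C`
(Nakaoka–Palu).  The realization `s` is encoded by the relation
`Real δ g f`, meaning that the sequence `Z ⟶ Y ⟶ X` belongs to the
equivalence class `s(δ)`. -/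
structure Extriangulated (C : Type u) [Category.{v} C] [Preadditive C]
    [HasZeroObject C] [HasBinaryBiproducts C] where
  /-- the bifunctor of `E`-extensions -/
  E : Cᵒᵖ ⥤ C ⥤ AddCommGrpCat.{v}
  additive₁ : E.Additive
  additive₂ : ∀ X : Cᵒᵖ, (E.obj X).Additive
  /-- `Real δ g f` : the pair `(g, f)` realizes the extension `δ`. -/
  Real : ∀ ⦃X Z : C⦄, ((E.obj (op X)).obj Z) → ∀ ⦃Y : C⦄, (Z ⟶ Y) → (Y ⟶ X) → Prop
  /-- every extension is realized -/
  real_exists : ∀ ⦃X Z : C⦄ (δ : (E.obj (op X)).obj Z),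
    ∃ (Y : C) (g : Z ⟶ Y) (f : Y ⟶ X), Real δ g f
  /-- any two realizations of the same extension are equivalent -/
  real_unique : ∀ ⦃X Z : C⦄ (δ : (E.obj (op X)).obj Z) ⦃Y Y' : C⦄
    (g : Z ⟶ Y) (f : Y ⟶ X) (g' : Z ⟶ Y') (f' : Y' ⟶ X),
    Real δ g f → Real δ g' f' →
    ∃ i : Y ≅ Y', g ≫ i.hom = g' ∧ i.hom ≫ f' = f
  /-- the realization is closed under equivalence of sequences -/
  real_of_iso : ∀ ⦃X Z : C⦄ (δ : (E.obj (op X)).obj Z) ⦃Y Y' : C⦄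
    (g : Z ⟶ Y) (f : Y ⟶ X) (i : Y ≅ Y'),
    Real δ g f → Real δ (g ≫ i.hom) (i.inv ≫ f)
  /-- `s(0)` is the split sequence (additivity of `s`, part 1) -/
  real_zero : ∀ (X Z : C),
    Real (0 : (E.obj (op X)).obj Z) (biprod.inl : Z ⟶ Z ⊞ X) (biprod.snd : Z ⊞ X ⟶ X)
  /-- `s(δ ⊕ δ') = s(δ) ⊕ s(δ')` (additivity of `s`, part 2) -/
  real_add : ∀ ⦃X Z X' Z' : C⦄ (δ : (E.obj (op X)).obj Z) (δ' : (E.obj (op X')).obj Z')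
    ⦃Y Y' : C⦄ (g : Z ⟶ Y) (f : Y ⟶ X) (g' : Z' ⟶ Y') (f' : Y' ⟶ X'),
    Real δ g f → Real δ' g' f' →
    Real ((E.map (biprod.fst : X ⊞ X' ⟶ X).op).app _ ((E.obj (op X)).map (biprod.inl : Z ⟶ Z ⊞ Z') δ) +
          (E.map (biprod.snd : X ⊞ X' ⟶ X').op).app _ ((E.obj (op X')).map (biprod.inr : Z' ⟶ Z ⊞ Z') δ'))
      (biprod.map g g') (biprod.map f f')
  /-- realization of morphisms of extensions (condition `(∗)`) -/
  real_lift : ∀ ⦃X Z X' Z' : C⦄ (δ : (E.obj (op X)).obj Z) (δ' : (E.obj (op X')).obj Z')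
    ⦃Y Y' : C⦄ (g : Z ⟶ Y) (f : Y ⟶ X) (g' : Z' ⟶ Y') (f' : Y' ⟶ X')
    (z : Z ⟶ Z') (x : X ⟶ X'),
    Real δ g f → Real δ' g' f' →
    (E.obj (op X)).map z δ = (E.map x.op).app Z' δ' →
    ∃ y : Y ⟶ Y', g ≫ y = z ≫ g' ∧ y ≫ f' = f ≫ x
  /-- (ET3) -/
  et3 : ∀ ⦃X Z X' Z' : C⦄ (δ : (E.obj (op X)).obj Z) (δ' : (E.obj (op X')).obj Z')
    ⦃Y Y' : C⦄ (g : Z ⟶ Y) (f : Y ⟶ X) (g' : Z' ⟶ Y') (f' : Y' ⟶ X')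
    (z : Z ⟶ Z') (y : Y ⟶ Y'),
    Real δ g f → Real δ' g' f' → g ≫ y = z ≫ g' →
    ∃ x : X ⟶ X', y ≫ f' = f ≫ x ∧
      (E.obj (op X)).map z δ = (E.map x.op).app Z' δ'
  /-- (ET3)ᵒᵖ -/
  et3op : ∀ ⦃X Z X' Z' : C⦄ (δ : (E.obj (op X)).obj Z) (δ' : (E.obj (op X')).obj Z')
    ⦃Y Y' : C⦄ (g : Z ⟶ Y) (f : Y ⟶ X) (g' : Z' ⟶ Y') (f' : Y' ⟶ X')
    (y : Y ⟶ Y') (x : X ⟶ X'),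
    Real δ g f → Real δ' g' f' → y ≫ f' = f ≫ x →
    ∃ z : Z ⟶ Z', g ≫ y = z ≫ g' ∧
      (E.obj (op X)).map z δ = (E.map x.op).app Z' δ'
  /-- (ET4) -/
  et4 : ∀ ⦃X Z A : C⦄ ⦃Y B : C⦄
    (δ : (E.obj (op X)).obj Z) (δ' : (E.obj (op A)).obj Y)
    (g : Z ⟶ Y) (f : Y ⟶ X) (b : Y ⟶ B) (a : B ⟶ A),
    Real δ g f → Real δ' b a →
    ∃ (Cc : C) (f' : B ⟶ Cc) (b' : X ⟶ Cc) (a' : Cc ⟶ A)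
      (δ'' : (E.obj (op Cc)).obj Z),
      Real δ'' (g ≫ b) f' ∧
      f ≫ b' = b ≫ f' ∧ f' ≫ a' = a ∧
      Real ((E.obj (op A)).map f δ') b' a' ∧
      (E.map b'.op).app Z δ'' = δ ∧
      (E.obj (op Cc)).map g δ'' = (E.map a'.op).app Y δ'
  /-- (ET4)ᵒᵖ -/
  et4op : ∀ ⦃X Y Z A B : C⦄
    (δ : (E.obj (op Z)).obj X) (δ' : (E.obj (op Y)).obj A)
    (f : X ⟶ Y) (g : Y ⟶ Z) (m : A ⟶ B) (n : B ⟶ Y),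
    Real δ f g → Real δ' m n →
    ∃ (Cc : C) (f' : Cc ⟶ B) (b' : Cc ⟶ X) (a' : A ⟶ Cc)
      (δ'' : (E.obj (op Z)).obj Cc),
      Real δ'' f' (n ≫ g) ∧
      b' ≫ f = f' ≫ n ∧ a' ≫ f' = m ∧
      Real ((E.map f.op).app A δ') a' b' ∧
      (E.obj (op Z)).map b' δ'' = δ ∧
      (E.map g.op).app Cc δ'' = (E.obj (op Y)).map a' δ'

namespace Extriangulated

variable {C : Type u} [Category.{v} C] [Preadditive C]
  [HasZeroObject C] [HasBinaryBiproducts C] (ET : Extriangulated C)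

/-- `(g, f)` is a conflation. -/
def IsConflation ⦃Z Y X : C⦄ (g : Z ⟶ Y) (f : Y ⟶ X) : Prop :=
  ∃ δ : ((ET.E.obj (op X)).obj Z), ET.Real δ g f

/-- `f` is a deflation. -/
def IsDeflation ⦃Y X : C⦄ (f : Y ⟶ X) : Prop :=
  ∃ (Z : C) (g : Z ⟶ Y), ET.IsConflation g f

/-- `g` is an inflation. -/
def IsInflation ⦃Z Y : C⦄ (g : Z ⟶ Y) : Prop :=
  ∃ (X : C) (f : Y ⟶ X), ET.IsConflation g f

end Extriangulated


variable {C : Type u} [Category.{v} C] [Preadditive C]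
  [HasZeroObject C] [HasBinaryBiproducts C]

/-- A `C`-module `F` is effaceable if every element of `F` is killed by some
deflation. -/
def IsEffaceable (ET : Extriangulated C) (F : Mod C) : Prop :=
  ∀ (X : C) (x : F.obj (op X)), ∃ (Y : C) (α : Y ⟶ X),
    ET.IsDeflation α ∧ F.map α.op x = 0

/-- A `C`-module `F` is a defect if for some conflation `Z ⟶ Y ⟶ X` there is
an exact sequence `Hom(-,Z) ⟶ Hom(-,Y) ⟶ Hom(-,X) ⟶ F ⟶ 0`, i.e. `F` is the
cokernel of `Hom(-,Y) ⟶ Hom(-,X)` (expressed pointwise). -/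
def IsDefect (ET : Extriangulated C) (F : Mod C) : Prop :=
  ∃ (Z Y X : C) (g : Z ⟶ Y) (f : Y ⟶ X), ET.IsConflation g f ∧
    ∃ p : preadditiveYoneda.obj X ⟶ F,
      (∀ W : Cᵒᵖ, Function.Surjective (p.app W)) ∧
      (∀ (W : C) (h : W ⟶ X), p.app (op W) h = 0 ↔ ∃ k : W ⟶ Y, k ≫ f = h)

/-- A `C`-module `F` is left exact if it sends every conflation `Z ⟶ Y ⟶ X`
to an exact sequence `0 ⟶ F(X) ⟶ F(Y) ⟶ F(Z)`. -/
def IsLeftExact (ET : Extriangulated C) (F : Mod C) : Prop :=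
  ∀ ⦃Z Y X : C⦄ (g : Z ⟶ Y) (f : Y ⟶ X), ET.IsConflation g f →
    Function.Injective (F.map f.op) ∧
    ∀ y : F.obj (op Y), F.map g.op y = 0 ↔ ∃ x : F.obj (op X), F.map f.op x = y

end PaperStmt

/-!
A defect `F = coker Hom(-, f)` of a conflation `Z ⟶ Y ⟶ X` is effaceable: an element of `F(X₀)`
is the image of some `h : X₀ ⟶ X`, and realizing the pullback of the extension along `h` gives a
deflation `α` such that `α ≫ h` factors through `f`, so `α` kills the element.

Conversely, let `F = coker Hom(-, f)` with `f : Y ⟶ X` be effaceable. A deflation `α : Y' ⟶ X`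
killing the generator `p(𝟙 X)` factors through `f`, so `[f α] : Y ⊞ Y' ⟶ X` presents `F` as well.
It is a deflation: it is `𝟙 ⊕ α` followed by `[f 𝟙]`, which is the split deflation twisted by a
unipotent automorphism, and deflations are closed under composition by (ET4)ᵒᵖ. Hence `F` is the
defect of a conflation ending in `[f α]`.
-/

namespace PaperStmt

section

variable {C : Type u} [Category.{v} C] [Preadditive C]

def IsCokernelPresentation {Y X : C} (f : Y ⟶ X) {F : Mod C}
    (p : preadditiveYoneda.obj X ⟶ F) : Prop :=
  (∀ W : Cᵒᵖ, Function.Surjective (p.app W)) ∧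
    (∀ (W : C) (h : W ⟶ X), p.app (op W) h = 0 ↔ ∃ k : W ⟶ Y, k ≫ f = h)

lemma map_app_preadditiveYoneda {X W V : C} {F : Mod C} (p : preadditiveYoneda.obj X ⟶ F)
    (h : W ⟶ X) (α : V ⟶ W) : F.map α.op (p.app (op W) h) = p.app (op V) (α ≫ h) :=
  (NatTrans.naturality_apply p α.op h).symm

lemma IsCokernelPresentation.of_factors {Y Y' X : C} {f : Y ⟶ X} {f' : Y' ⟶ X} {F : Mod C}
    {p : preadditiveYoneda.obj X ⟶ F} (hp : IsCokernelPresentation f p) (a : Y ⟶ Y')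
    (b : Y' ⟶ Y) (ha : a ≫ f' = f) (hb : b ≫ f = f') : IsCokernelPresentation f' p := by
  refine ⟨hp.1, fun W h => (hp.2 W h).trans ⟨?_, ?_⟩⟩
  · rintro ⟨k, rfl⟩
    exact ⟨k ≫ a, by rw [Category.assoc, ha]⟩
  · rintro ⟨k, rfl⟩
    exact ⟨k ≫ b, by rw [Category.assoc, hb]⟩

end

namespace Extriangulated

variable {C : Type u} [Category.{v} C] [Preadditive C] [HasZeroObject C] [HasBinaryBiproducts C]
  (ET : Extriangulated C)

theorem isDeflation_biprod_snd (Z X : C) : ET.IsDeflation (biprod.snd : Z ⊞ X ⟶ X) :=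
  ⟨Z, biprod.inl, 0, ET.real_zero X Z⟩

variable {ET}

theorem IsDeflation.iso_hom_comp {Y' Y X : C} (e : Y' ≅ Y) {f : Y ⟶ X}
    (hf : ET.IsDeflation f) : ET.IsDeflation (e.hom ≫ f) := by
  obtain ⟨Z, g, δ, hδ⟩ := hf
  exact ⟨Z, g ≫ e.inv, δ, ET.real_of_iso δ g f e.symm hδ⟩

theorem IsDeflation.comp {B Y X : C} {n : B ⟶ Y} {f : Y ⟶ X} (hn : ET.IsDeflation n)
    (hf : ET.IsDeflation f) : ET.IsDeflation (n ≫ f) := by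
  obtain ⟨A, m, δ', hδ'⟩ := hn
  obtain ⟨Z, g, δ, hδ⟩ := hf
  obtain ⟨K, f', -, -, δ'', hδ'', -⟩ := ET.et4op δ δ' g f m n hδ hδ'
  exact ⟨K, f', δ'', hδ''⟩

theorem IsDeflation.biprod_map {Y X Y' X' : C} {f : Y ⟶ X} {f' : Y' ⟶ X'}
    (hf : ET.IsDeflation f) (hf' : ET.IsDeflation f') : ET.IsDeflation (biprod.map f f') := by
  obtain ⟨Z, g, δ, hδ⟩ := hf
  obtain ⟨Z', g', δ', hδ'⟩ := hf'
  exact ⟨Z ⊞ Z', biprod.map g g', _, ET.real_add δ δ' g f g' f' hδ hδ'⟩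

variable (ET)

open ZeroObject in
theorem isDeflation_id (X : C) : ET.IsDeflation (𝟙 X) := by
  simpa using (ET.isDeflation_biprod_snd 0 X).iso_hom_comp (isoZeroBiprod (isZero_zero C))

theorem isDeflation_biprod_desc_id {Y X : C} (f : Y ⟶ X) :
    ET.IsDeflation (biprod.desc f (𝟙 X)) := by
  have hshear : (Biprod.unipotentUpper f).hom ≫ biprod.snd = biprod.desc f (𝟙 X) := by
    ext <;> simp [Biprod.ofComponents]
  exact hshear ▸ (ET.isDeflation_biprod_snd Y X).iso_hom_comp _

variable {ET}

theorem IsDeflation.biprod_desc {Y Y' X : C} (f : Y ⟶ X) {α : Y' ⟶ X}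
    (hα : ET.IsDeflation α) : ET.IsDeflation (biprod.desc f α) := by
  have hfactor : biprod.map (𝟙 Y) α ≫ biprod.desc f (𝟙 X) = biprod.desc f α := by
    ext <;> simp
  exact hfactor ▸ ((ET.isDeflation_id Y).biprod_map hα).comp (ET.isDeflation_biprod_desc_id f)

theorem IsDeflation.exists_comp_eq_comp {Y X X₀ : C} {f : Y ⟶ X} (hf : ET.IsDeflation f)
    (h : X₀ ⟶ X) : ∃ (V : C) (α : V ⟶ X₀) (y : V ⟶ Y), ET.IsDeflation α ∧ y ≫ f = α ≫ h := by
  obtain ⟨Z, g, δ, hδ⟩ := hf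
  obtain ⟨V, g', α, hδ'⟩ := ET.real_exists ((ET.E.map h.op).app Z δ)
  obtain ⟨y, -, hy⟩ := ET.real_lift _ δ g' α g f (𝟙 Z) h hδ' hδ (by simp)
  exact ⟨V, α, y, ⟨Z, g', _, hδ'⟩, hy⟩

end Extriangulated

section

variable {C : Type u} [Category.{v} C] [Preadditive C] [HasZeroObject C] [HasBinaryBiproducts C]
  {ET : Extriangulated C} {F : Mod C} {Y X : C} {f : Y ⟶ X} {p : preadditiveYoneda.obj X ⟶ F}

theorem IsCokernelPresentation.isEffaceable (hp : IsCokernelPresentation f p)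
    (hf : ET.IsDeflation f) : IsEffaceable ET F := by
  intro X₀ x
  obtain ⟨h, rfl⟩ := hp.1 (op X₀) x
  obtain ⟨V, α, y, hα, hy⟩ := hf.exists_comp_eq_comp h
  exact ⟨V, α, hα, (map_app_preadditiveYoneda p h α).trans ((hp.2 V _).2 ⟨y, hy⟩)⟩

theorem IsCokernelPresentation.isDefect (hp : IsCokernelPresentation f p)
    (heff : IsEffaceable ET F) : IsDefect ET F := by
  obtain ⟨Y', α, hα, hpα⟩ := heff X (p.app (op X) (𝟙 X))
  rw [map_app_preadditiveYoneda, Category.comp_id] at hpα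
  obtain ⟨k, hk⟩ := (hp.2 Y' α).1 hpα
  obtain ⟨Z, g, hg⟩ := hα.biprod_desc f
  refine ⟨Z, _, X, g, _, hg, p, hp.of_factors biprod.inl (biprod.fst + biprod.snd ≫ k) ?_ ?_⟩
  · simp
  · ext <;> simp [hk]

end

theorem effaceable_iff_defect_general
    {C : Type u} [Category.{v} C] [Preadditive C] [HasZeroObject C]
    [HasBinaryBiproducts C] (ET : Extriangulated C)
    (F : Mod C) (hF : IsFinitelyPresented F) :
    IsEffaceable ET F ↔ IsDefect ET F := by
  obtain ⟨Y, X, f, p, hp⟩ := hF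
  refine ⟨IsCokernelPresentation.isDefect hp, ?_⟩
  rintro ⟨Z, Y', X', g, f', hgf', p', hp'⟩
  exact IsCokernelPresentation.isEffaceable hp' ⟨Z, g, hgf'⟩

/-- For an extriangulated category with weak kernels, a finitely presented
functor is effaceable if and only if it is a defect: `eff C = def C`. -/
theorem effaceable_iff_defect
    {C : Type u} [Category.{v} C] [Preadditive C] [HasZeroObject C]
    [HasBinaryBiproducts C] (ET : Extriangulated C) (hwk : HasWeakKernels C)
    (F : Mod C) (hF : IsFinitelyPresented F) :
    IsEffaceable ET F ↔ IsDefect ET F :=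
  effaceable_iff_defect_general ET F hF

end PaperStmt

end
end

section
/- Let C be an extriangulated category with weak kernels. Then the perpendicular category (def C)^⊥ = {F ∈ mod C : Hom(S,F) = 0 = Ext¹(S,F) for all S ∈ def C} coincides with the full subcategory lex C of left exact functors, i.e., functors F sending every conflation X → Y → Z to an exact sequence 0 → F(Z) → F(Y) → F(X). -/
open CategoryTheory CategoryTheory.Limits Opposite

universe w' w v u

noncomputable section

namespace PaperStmt

variable {C : Type u} [Category.{v} C] [Preadditive C]

variable {C : Type u} [Category.{v} C] [Preadditive C]
  [HasZeroObject C] [HasBinaryBiproducts C]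

/-- `Ext¹(S, F) = 0` in `mod C`, expressed by the splitting of every
(pointwise) short exact sequence `0 ⟶ F ⟶ G ⟶ S ⟶ 0` of finitely presented
functors. -/
def Ext1VanishesFP {C : Type u} [Category.{v} C] [Preadditive C]
    (S F : Mod C) : Prop :=
  ∀ (G : Mod C), IsFinitelyPresented G → ∀ (i : F ⟶ G) (p : G ⟶ S),
    (∀ W, Function.Injective (i.app W)) → (∀ W, Function.Surjective (p.app W)) →
    (∀ (W : Cᵒᵖ) (y : G.obj W), p.app W y = 0 ↔ ∃ x, i.app W x = y) →
    ∃ r : G ⟶ F, i ≫ r = 𝟙 F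

end PaperStmt

/-!
If `F` is left exact and `S` is the defect of a conflation `Z ⟶ Y ⟶ X`, i.e. the cokernel of
`Hom(-, Y) ⟶ Hom(-, X)`, then a morphism `S ⟶ F` is an element `x ∈ F(X)` with `F(f) x = 0`, so
`x = 0`. Given an extension `0 ⟶ F ⟶ G ⟶ S ⟶ 0`, lift the generator of `S` to `g₀ ∈ G(X)`; the
image of `g₀` in `G(Y)` comes from some `y ∈ F(Y)` with `F(g) y = 0`, so `y = F(f) x₀` by left
exactness, and `g₀ - x₀` defines a section of `G ⟶ S`.

Conversely, `Hom(def f, F) = 0` forces `F(f)` to be injective, since an element of its kernel is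
a morphism `def f ⟶ F`. If `F(g) y = 0`, then `y` kills
every `k` with `k ≫ f = 0`, because `k` factors through `g`; hence the pushout of
`Hom(-, X) ⟵ Hom(-, Y) ⟶ F` along `y` is a finitely presented extension of `def f` by `F`, and
its splitting carries the class of `𝟙 X` to some `x` with `F(f) x = y`.
-/

namespace PaperStmt

section PointwiseExactness

variable {J : Type*} [Category J]

section Desc

variable {A S G : J ⥤ AddCommGrpCat.{w}} (p : A ⟶ S) (hp : ∀ W, Function.Surjective (p.app W))
  (φ : A ⟶ G) (hφ : ∀ W a, p.app W a = 0 → φ.app W a = 0)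

def descOfSurjective : S ⟶ G where
  app W := AddCommGrpCat.ofHom <|
    (p.app W).hom.liftOfSurjective (hp W) ⟨(φ.app W).hom, hφ W⟩
  naturality W W' u := by
    ext x
    obtain ⟨a, rfl⟩ := hp W x
    have hlift W a :
        (p.app W).hom.liftOfSurjective (hp W) ⟨(φ.app W).hom, hφ W⟩
          (p.app W a) = φ.app W a :=
      (p.app W).hom.liftOfRightInverse_comp_apply _ _ _ a
    simp only [ConcreteCategory.comp_apply, AddCommGrpCat.hom_ofHom]
    rw [← NatTrans.naturality_apply p, hlift, hlift, NatTrans.naturality_apply]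

lemma descOfSurjective_app_apply (W : J) (a : A.obj W) :
    (descOfSurjective p hp φ hφ).app W (p.app W a) = φ.app W a :=
  (p.app W).hom.liftOfRightInverse_comp_apply _ _ _ a

lemma comp_descOfSurjective : p ≫ descOfSurjective p hp φ hφ = φ := by
  ext W a
  exact descOfSurjective_app_apply p hp φ hφ W a

end Desc

lemma exists_comp_eq_of_injective {F G H : J ⥤ AddCommGrpCat.{w}} (i : F ⟶ G)
    (hi : ∀ W, Function.Injective (i.app W)) (ψ : H ⟶ G)
    (hψ : ∀ W b, ∃ a, i.app W a = ψ.app W b) : ∃ r : H ⟶ F, r ≫ i = ψ := by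
  choose r hr using hψ
  have hr_add W b b' : r W (b + b') = r W b + r W b' :=
    hi W (by simp only [map_add, hr])
  refine ⟨{ app := fun W => AddCommGrpCat.ofHom (AddMonoidHom.mk' (r W) (hr_add W))
            naturality := fun W W' u => ?_ }, ?_⟩
  · ext b
    apply hi W'
    simp [hr]
  · ext W b
    exact hr W b

lemma epi_of_surjective_app {A S : J ⥤ AddCommGrpCat.{w}} (p : A ⟶ S)
    (hp : ∀ W, Function.Surjective (p.app W)) : Epi p :=
  have := fun W => (AddCommGrpCat.epi_iff_surjective (p.app W)).2 (hp W)
  NatTrans.epi_of_epi_app p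

lemma exists_retraction_of_section {F G S : J ⥤ AddCommGrpCat.{w}} (i : F ⟶ G)
    (q : G ⟶ S) (hi : ∀ W, Function.Injective (i.app W))
    (hexact : ∀ W y, q.app W y = 0 ↔ ∃ x, i.app W x = y) (s : S ⟶ G) (hs : s ≫ q = 𝟙 S) :
    ∃ r : G ⟶ F, i ≫ r = 𝟙 F := by
  have hiq : i ≫ q = 0 := by
    ext W x
    exact (hexact W _).2 ⟨x, rfl⟩
  obtain ⟨r, hr⟩ := exists_comp_eq_of_injective i hi (𝟙 G - q ≫ s) fun W y =>
    (hexact W _).1 (by simp [← ConcreteCategory.comp_apply, ← NatTrans.comp_app, hs])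
  have := fun W => (AddCommGrpCat.mono_iff_injective (i.app W)).2 (hi W)
  have := NatTrans.mono_of_mono_app i
  refine ⟨r, (cancel_mono i).1 ?_⟩
  simp [hr, Preadditive.comp_sub, reassoc_of% hiq]

end PointwiseExactness

section PointwiseCokernel

variable {J : Type*} [Category J] {A B : J ⥤ AddCommGrpCat.{w}} (τ : A ⟶ B)

def pointwiseCokernel : J ⥤ AddCommGrpCat.{w} where
  obj W := .of (B.obj W ⧸ (τ.app W).hom.range)
  map u := AddCommGrpCat.ofHom <| QuotientAddGroup.map _ _ (B.map u).hom <| by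
    rintro _ ⟨a, rfl⟩
    exact ⟨A.map u a, NatTrans.naturality_apply τ u a⟩
  map_id W := by
    ext x
    simp
  map_comp u u' := by
    ext x
    simp

def pointwiseCokernel.π : B ⟶ pointwiseCokernel τ where
  app W := AddCommGrpCat.ofHom (QuotientAddGroup.mk' _)

lemma pointwiseCokernel.π_surjective (W : J) : Function.Surjective ((π τ).app W) :=
  QuotientAddGroup.mk'_surjective _

lemma pointwiseCokernel.π_app_eq_zero_iff (W : J) (b : B.obj W) :
    (π τ).app W b = 0 ↔ ∃ a, τ.app W a = b :=
  QuotientAddGroup.eq_zero_iff b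

end PointwiseCokernel

section Yoneda

variable {C : Type u} [Category.{v} C] [Preadditive C]

def IsYonedaCokernel {S : Mod C} {Y X : C} (f : Y ⟶ X) (p : preadditiveYoneda.obj X ⟶ S) :
    Prop :=
  (∀ W : Cᵒᵖ, Function.Surjective (p.app W)) ∧
    ∀ (W : C) (h : W ⟶ X), p.app (op W) h = 0 ↔ ∃ k : W ⟶ Y, k ≫ f = h

lemma isYonedaCokernel_π {Y X : C} (f : Y ⟶ X) :
    IsYonedaCokernel f (pointwiseCokernel.π (preadditiveYoneda.map f)) :=
  ⟨pointwiseCokernel.π_surjective _,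
    fun W _ => pointwiseCokernel.π_app_eq_zero_iff _ (op W) _⟩

lemma isFinitelyPresented_pointwiseCokernel {Y X : C} (f : Y ⟶ X) :
    IsFinitelyPresented (pointwiseCokernel (preadditiveYoneda.map f)) :=
  ⟨Y, X, f, _, isYonedaCokernel_π f⟩

lemma yoneda_app_comp {G : Mod C} {X W W' : C} (τ : preadditiveYoneda.obj X ⟶ G) (k : W' ⟶ W)
    (h : W ⟶ X) : τ.app (op W') (k ≫ h) = G.map k.op (τ.app (op W) h) :=
  NatTrans.naturality_apply τ k.op h

lemma yoneda_app_eq_map {G : Mod C} {X W : C} (τ : preadditiveYoneda.obj X ⟶ G) (h : W ⟶ X) :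
    τ.app (op W) h = G.map h.op (τ.app (op X) (𝟙 X)) := by
  simpa using yoneda_app_comp τ h (𝟙 X)

lemma yoneda_ext {G : Mod C} {X : C} {τ τ' : preadditiveYoneda.obj X ⟶ G}
    (h : τ.app (op X) (𝟙 X) = τ'.app (op X) (𝟙 X)) : τ = τ' := by
  ext ⟨W⟩ k
  rw [yoneda_app_eq_map τ k, yoneda_app_eq_map τ' k, h]

def yonedaHom (G : Mod C) [G.Additive] {X : C} (x : G.obj (op X)) :
    preadditiveYoneda.obj X ⟶ G where
  app W := AddCommGrpCat.ofHom (show (unop W ⟶ X) →+ G.obj W from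
    AddMonoidHom.mk' (fun h => G.map h.op x) fun h h' => by rw [op_add, G.map_add]; rfl)
  naturality W W' u := by
    ext h
    exact congr($(G.map_comp h.op u) x)

lemma yonedaHom_app_apply (G : Mod C) [G.Additive] {X W : C} (x : G.obj (op X)) (h : W ⟶ X) :
    (yonedaHom G x).app (op W) h = G.map h.op x :=
  rfl

lemma yonedaHom_app_id (G : Mod C) [G.Additive] {X : C} (x : G.obj (op X)) :
    (yonedaHom G x).app (op X) (𝟙 X) = x := by
  rw [yonedaHom_app_apply, op_id, G.map_id]
  rfl

lemma IsFinitelyPresented.additive {F : Mod C} (hF : IsFinitelyPresented F) : F.Additive := by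
  obtain ⟨Y, X, f, p, hp, -⟩ := hF
  refine ⟨fun {W W'} a b => ?_⟩
  ext x
  obtain ⟨u, rfl⟩ := hp W x
  rw [AddCommGrpCat.hom_add, AddMonoidHom.add_apply, ← NatTrans.naturality_apply,
    ← NatTrans.naturality_apply, ← NatTrans.naturality_apply, ← map_add]
  exact congr_arg (p.app W') (Preadditive.add_comp _ _ _ _ _ _)

end Yoneda

namespace Extriangulated

open ZeroObject

variable {C : Type u} [Category.{v} C] [Preadditive C] [HasZeroObject C] [HasBinaryBiproducts C]
  {ET : Extriangulated C}

variable (ET) in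
/-- Comparing a conflation with this split one via (ET3) and (ET3)ᵒᵖ shows that a conflation is
a complex whose first map is a weak kernel of the second. -/
lemma real_zero_id_zero (W : C) :
    ET.Real (0 : (ET.E.obj (op (0 : C))).obj W) (𝟙 W) (0 : W ⟶ 0) := by
  have : IsIso (biprod.inl : W ⟶ W ⊞ 0) :=
    ⟨biprod.fst, biprod.inl_fst, biprod.hom_ext _ _ (by simp) ((isZero_zero C).eq_of_tgt _ _)⟩
  simpa using ET.real_of_iso 0 _ _ (asIso (biprod.inl : W ⟶ W ⊞ 0)).symm (ET.real_zero 0 W)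

lemma IsConflation.comp_eq_zero {Z Y X : C} {g : Z ⟶ Y} {f : Y ⟶ X}
    (hc : ET.IsConflation g f) : g ≫ f = 0 := by
  obtain ⟨δ, hδ⟩ := hc
  obtain ⟨x, hx, -⟩ := ET.et3 0 δ (𝟙 Z) 0 g f (𝟙 Z) g (real_zero_id_zero ET Z) hδ rfl
  simpa using hx

lemma IsConflation.exists_comp_eq {Z Y X : C} {g : Z ⟶ Y} {f : Y ⟶ X}
    (hc : ET.IsConflation g f) {W : C} (h : W ⟶ Y) (hh : h ≫ f = 0) :
    ∃ t : W ⟶ Z, t ≫ g = h := by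
  obtain ⟨δ, hδ⟩ := hc
  obtain ⟨t, ht, -⟩ :=
    ET.et3op 0 δ (𝟙 W) 0 g f h 0 (real_zero_id_zero ET W) hδ (by simp [hh])
  exact ⟨t, by simpa using ht.symm⟩

lemma IsConflation.map_eq_zero_of_comp_eq_zero {F : Mod C} {Z Y X : C} {g : Z ⟶ Y}
    {f : Y ⟶ X} (hc : ET.IsConflation g f) {y : F.obj (op Y)} (hy : F.map g.op y = 0) (W : C)
    (k : W ⟶ Y) (hk : k ≫ f = 0) : F.map k.op y = 0 := by
  obtain ⟨t, rfl⟩ := hc.exists_comp_eq k hk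
  rw [op_comp, F.map_comp, ConcreteCategory.comp_apply, hy, map_zero]

lemma IsConflation.map_map_eq_zero {F : Mod C} [F.Additive] {Z Y X : C} {g : Z ⟶ Y} {f : Y ⟶ X}
    (hc : ET.IsConflation g f) (x : F.obj (op X)) : F.map g.op (F.map f.op x) = 0 := by
  rw [← ConcreteCategory.comp_apply, ← F.map_comp, ← op_comp, hc.comp_eq_zero, op_zero,
    F.map_zero]
  rfl

end Extriangulated

section LeftExactIsPerpendicular

variable {C : Type u} [Category.{v} C] [Preadditive C] [HasZeroObject C] [HasBinaryBiproducts C]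
  {ET : Extriangulated C} {F : Mod C} {Z Y X : C} {g : Z ⟶ Y} {f : Y ⟶ X} {S : Mod C}
  {p : preadditiveYoneda.obj X ⟶ S}

lemma IsLeftExact.hom_eq_zero (hF : IsLeftExact ET F) (hc : ET.IsConflation g f)
    (hp : IsYonedaCokernel f p) (α : S ⟶ F) : α = 0 := by
  have := epi_of_surjective_app p hp.1
  refine (cancel_epi p).1 (yoneda_ext ?_)
  have hpf : p.app (op Y) f = 0 := (hp.2 Y f).2 ⟨𝟙 Y, Category.id_comp f⟩
  have hx : F.map f.op ((p ≫ α).app (op X) (𝟙 X)) = 0 := by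
    rw [← yoneda_app_eq_map]
    change α.app (op Y) (p.app (op Y) f) = 0
    rw [hpf, map_zero]
  rw [(hF g f hc).1 (hx.trans (map_zero _).symm)]
  rfl

lemma IsLeftExact.ext1VanishesFP (hF : IsLeftExact ET F) (hc : ET.IsConflation g f)
    (hp : IsYonedaCokernel f p) (hFp : IsFinitelyPresented F) : Ext1VanishesFP S F := by
  intro G hG i q hi hq hexact
  have := hG.additive
  have := hFp.additive
  have := epi_of_surjective_app p hp.1
  have hiq : i ≫ q = 0 := by
    ext W x
    exact (hexact W _).2 ⟨x, rfl⟩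
  obtain ⟨g₀, hg₀⟩ := hq (op X) (p.app (op X) (𝟙 X))
  have hQ : yonedaHom G g₀ ≫ q = p := yoneda_ext (by
    change q.app (op X) ((yonedaHom G g₀).app (op X) (𝟙 X)) = _
    rw [yonedaHom_app_id, hg₀])
  obtain ⟨y, hy⟩ := (hexact (op Y) ((yonedaHom G g₀).app (op Y) f)).1 (by
    change (yonedaHom G g₀ ≫ q).app (op Y) f = 0
    rw [hQ]
    exact (hp.2 Y f).2 ⟨𝟙 Y, Category.id_comp f⟩)
  have hgy : F.map g.op y = 0 := hi (op Z) (by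
    rw [NatTrans.naturality_apply, hy, ← yoneda_app_comp, hc.comp_eq_zero, map_zero]
    exact map_zero _)
  obtain ⟨x₀, hx₀⟩ := ((hF g f hc).2 y).1 hgy
  set φ := yonedaHom G g₀ - yonedaHom F x₀ ≫ i
  have hφ : φ.app (op Y) f = 0 := by
    change (yonedaHom G g₀).app (op Y) f - i.app (op Y) ((yonedaHom F x₀).app (op Y) f) = 0
    rw [yonedaHom_app_apply F, hx₀, hy, sub_self]
  have hφ_ker W a (ha : p.app W a = 0) : φ.app W a = 0 := by
    obtain ⟨k, rfl⟩ := (hp.2 W.unop a).1 ha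
    rw [yoneda_app_comp, hφ, map_zero]
  refine exists_retraction_of_section i q hi hexact (descOfSurjective p hp.1 φ hφ_ker)
    ((cancel_epi p).1 ?_)
  rw [reassoc_of% comp_descOfSurjective, Preadditive.sub_comp, hQ, Category.assoc, hiq,
    comp_zero, sub_zero, Category.comp_id]

end LeftExactIsPerpendicular

section Pushout

variable {C : Type u} [Category.{v} C] [Preadditive C] [HasBinaryBiproducts C]
  {Y₀ X₀ Y X : C} (f : Y ⟶ X) (f₀ : Y₀ ⟶ X₀) (v : Y ⟶ X₀)

/-- If `f₀` presents `F` and `y ∈ F(Y)` is the class of `v`, then the cokernel of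
`Hom(-, pushoutMatrix f f₀ v)` is the pushout of `Hom(-, X) ⟵ Hom(-, Y) ⟶ F` along `f` and `y`. -/
def pushoutMatrix : Y ⊞ Y₀ ⟶ X ⊞ X₀ :=
  biprod.map f f₀ - biprod.fst ≫ v ≫ biprod.inr

@[simp]
lemma inl_pushoutMatrix :
    biprod.inl ≫ pushoutMatrix f f₀ v = f ≫ biprod.inl - v ≫ biprod.inr := by
  simp [pushoutMatrix]

@[simp]
lemma inr_pushoutMatrix : biprod.inr ≫ pushoutMatrix f f₀ v = f₀ ≫ biprod.inr := by
  simp [pushoutMatrix]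

@[simp]
lemma pushoutMatrix_fst : pushoutMatrix f f₀ v ≫ biprod.fst = biprod.fst ≫ f := by
  simp [pushoutMatrix]

@[simp]
lemma pushoutMatrix_snd :
    pushoutMatrix f f₀ v ≫ biprod.snd = biprod.snd ≫ f₀ - biprod.fst ≫ v := by
  simp [pushoutMatrix]

abbrev pushoutModule : Mod C :=
  pointwiseCokernel (preadditiveYoneda.map (pushoutMatrix f f₀ v))

abbrev pushoutπ : preadditiveYoneda.obj (X ⊞ X₀) ⟶ pushoutModule f f₀ v :=
  pointwiseCokernel.π _

lemma pushoutπ_app_eq_zero_iff {W : C} (a : W ⟶ X ⊞ X₀) :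
    (pushoutπ f f₀ v).app (op W) a = 0 ↔ ∃ t : W ⟶ Y ⊞ Y₀, t ≫ pushoutMatrix f f₀ v = a :=
  pointwiseCokernel.π_app_eq_zero_iff _ _ _

variable {S : Mod C} {p : preadditiveYoneda.obj X ⟶ S} (hp : IsYonedaCokernel f p)

def pushoutProj : pushoutModule f f₀ v ⟶ S :=
  descOfSurjective (pushoutπ f f₀ v) (pointwiseCokernel.π_surjective _)
    (preadditiveYoneda.map biprod.fst ≫ p) fun W a ha => by
      obtain ⟨t, rfl⟩ := (pushoutπ_app_eq_zero_iff f f₀ v a).1 ha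
      change p.app W ((t ≫ pushoutMatrix f f₀ v) ≫ biprod.fst) = 0
      exact (hp.2 W.unop _).2 ⟨t ≫ biprod.fst, by simp⟩

lemma pushoutProj_app_apply {W : C} (a : W ⟶ X ⊞ X₀) :
    (pushoutProj f f₀ v hp).app (op W) ((pushoutπ f f₀ v).app (op W) a) =
      p.app (op W) (a ≫ biprod.fst) :=
  descOfSurjective_app_apply (pushoutπ f f₀ v) _ _ _ (op W) a

lemma pushoutProj_surjective (W : Cᵒᵖ) :
    Function.Surjective ((pushoutProj f f₀ v hp).app W) := by
  obtain ⟨W⟩ := W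
  intro s
  obtain ⟨(a : W ⟶ X), rfl⟩ := hp.1 _ s
  exact ⟨(pushoutπ f f₀ v).app (op W) (a ≫ biprod.inl),
    (pushoutProj_app_apply f f₀ v hp _).trans (by rw [Category.assoc, biprod.inl_fst,
      Category.comp_id])⟩

variable {f₀} {F : Mod C} {q : preadditiveYoneda.obj X₀ ⟶ F} (hq : IsYonedaCokernel f₀ q)

def pushoutIncl : F ⟶ pushoutModule f f₀ v :=
  descOfSurjective q hq.1 (preadditiveYoneda.map biprod.inr ≫ pushoutπ f f₀ v) fun W a ha => by
    obtain ⟨m, rfl⟩ := (hq.2 W.unop a).1 ha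
    change (pushoutπ f f₀ v).app W ((m ≫ f₀) ≫ biprod.inr) = 0
    exact (pushoutπ_app_eq_zero_iff f f₀ v _).2 ⟨m ≫ biprod.inr, by simp⟩

lemma pushoutIncl_app_apply {W : C} (a : W ⟶ X₀) :
    (pushoutIncl f v hq).app (op W) (q.app (op W) a) =
      (pushoutπ f f₀ v).app (op W) (a ≫ biprod.inr) :=
  descOfSurjective_app_apply q hq.1 _ _ (op W) a

lemma pushoutIncl_injective
    (hv : ∀ (W : C) (k : W ⟶ Y), k ≫ f = 0 → q.app (op W) (k ≫ v) = 0) (W : Cᵒᵖ) :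
    Function.Injective ((pushoutIncl f v hq).app W) := by
  obtain ⟨W⟩ := W
  rw [injective_iff_map_eq_zero]
  intro x hx
  obtain ⟨(a : W ⟶ X₀), rfl⟩ := hq.1 _ x
  rw [pushoutIncl_app_apply, pushoutπ_app_eq_zero_iff] at hx
  obtain ⟨t, ht⟩ := hx
  have hfst : (t ≫ biprod.fst) ≫ f = 0 := by simpa using ht =≫ biprod.fst
  have hsnd : a = (t ≫ biprod.snd) ≫ f₀ - (t ≫ biprod.fst) ≫ v := by
    simpa [Preadditive.comp_sub] using (ht =≫ biprod.snd).symm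
  rw [hsnd]
  refine (map_sub _ _ _).trans ?_
  rw [hv _ _ hfst, (hq.2 _ _).2 ⟨_, rfl⟩, sub_zero]

lemma pushoutProj_app_eq_zero_iff (W : Cᵒᵖ) (z : (pushoutModule f f₀ v).obj W) :
    (pushoutProj f f₀ v hp).app W z = 0 ↔ ∃ x, (pushoutIncl f v hq).app W x = z := by
  obtain ⟨W⟩ := W
  constructor
  · intro ha
    obtain ⟨(a : W ⟶ X ⊞ X₀), rfl⟩ := pointwiseCokernel.π_surjective _ _ z
    rw [pushoutProj_app_apply] at ha
    obtain ⟨k, hk⟩ := (hp.2 W _).1 ha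
    refine ⟨q.app (op W) ((a - (k ≫ biprod.inl) ≫ pushoutMatrix f f₀ v) ≫ biprod.snd), ?_⟩
    have hrel : (-k ≫ biprod.inl : W ⟶ Y ⊞ Y₀) ≫ pushoutMatrix f f₀ v =
        ((a - (k ≫ biprod.inl) ≫ pushoutMatrix f f₀ v) ≫ biprod.snd) ≫ biprod.inr - a := by
      ext <;> simp [hk]
    rw [pushoutIncl_app_apply, ← sub_eq_zero]
    exact (map_sub _ _ _).symm.trans ((pushoutπ_app_eq_zero_iff f f₀ v _).2 ⟨_, hrel⟩)
  · rintro ⟨x, rfl⟩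
    obtain ⟨(b : W ⟶ X₀), rfl⟩ := hq.1 _ x
    rw [pushoutIncl_app_apply, pushoutProj_app_apply, Category.assoc, biprod.inr_fst, comp_zero]
    exact map_zero _

lemma pushoutModule_map_π_inl :
    (pushoutModule f f₀ v).map f.op ((pushoutπ f f₀ v).app (op X) biprod.inl) =
      (pushoutIncl f v hq).app (op Y) (q.app (op Y) v) := by
  have hnat := NatTrans.naturality_apply (pushoutπ f f₀ v) f.op (biprod.inl : X ⟶ X ⊞ X₀)
  rw [pushoutIncl_app_apply, ← hnat, ← sub_eq_zero]
  exact (map_sub _ _ _).symm.trans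
    ((pushoutπ_app_eq_zero_iff f f₀ v _).2 ⟨biprod.inl, inl_pushoutMatrix f f₀ v⟩)

end Pushout

section PerpendicularIsLeftExact

variable {C : Type u} [Category.{v} C] [Preadditive C] {F : Mod C} {Y X : C} {f : Y ⟶ X}
  {S : Mod C} {p : preadditiveYoneda.obj X ⟶ S} (hp : IsYonedaCokernel f p)
include hp

lemma map_injective_of_forall_hom_eq_zero [F.Additive] (h : ∀ α : S ⟶ F, α = 0) :
    Function.Injective (F.map f.op) := by
  rw [injective_iff_map_eq_zero]
  intro x hx
  have hker W a (ha : p.app W a = 0) : (yonedaHom F x).app W a = 0 := by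
    obtain ⟨k, rfl⟩ := (hp.2 W.unop a).1 ha
    rw [yoneda_app_comp, yonedaHom_app_apply, hx]
    exact map_zero _
  have hα := comp_descOfSurjective p hp.1 _ hker
  rw [h (descOfSurjective p hp.1 _ hker), comp_zero] at hα
  rw [← yonedaHom_app_id F x, ← hα]
  rfl

lemma exists_map_eq_of_ext1VanishesFP [HasBinaryBiproducts C] (hF : IsFinitelyPresented F)
    (hext : Ext1VanishesFP S F) (y : F.obj (op Y))
    (hy : ∀ (W : C) (k : W ⟶ Y), k ≫ f = 0 → F.map k.op y = 0) :
    ∃ x, F.map f.op x = y := by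
  obtain ⟨Y₀, X₀, f₀, q, hq⟩ := hF
  obtain ⟨(v : Y ⟶ X₀), rfl⟩ := hq.1 (op Y) y
  have hv W (k : W ⟶ Y) (hk : k ≫ f = 0) : q.app (op W) (k ≫ v) = 0 := by
    rw [yoneda_app_comp]
    exact hy W k hk
  obtain ⟨r, hr⟩ := hext _ (isFinitelyPresented_pointwiseCokernel _) (pushoutIncl f v hq)
    (pushoutProj f f₀ v hp) (pushoutIncl_injective f v hq hv) (pushoutProj_surjective f f₀ v hp)
    (pushoutProj_app_eq_zero_iff f v hp hq)
  refine ⟨r.app (op X) ((pushoutπ f f₀ v).app (op X) biprod.inl), ?_⟩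
  rw [← NatTrans.naturality_apply, pushoutModule_map_π_inl f v hq,
    ← ConcreteCategory.comp_apply, ← NatTrans.comp_app, hr]
  rfl

end PerpendicularIsLeftExact

theorem perp_defect_eq_leftExact_general
    {C : Type u} [Category.{v} C] [Preadditive C] [HasZeroObject C]
    [HasBinaryBiproducts C] (ET : Extriangulated C)
    (F : Mod C) (hF : IsFinitelyPresented F) :
    (∀ S : Mod C, IsDefect ET S → (∀ α : S ⟶ F, α = 0) ∧ Ext1VanishesFP S F) ↔
    IsLeftExact ET F := by
  have := hF.additive
  constructor
  · intro hperp Z Y X g f hc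
    have hp := isYonedaCokernel_π f
    obtain ⟨hhom, hext⟩ := hperp _ ⟨Z, Y, X, g, f, hc, _, hp⟩
    refine ⟨map_injective_of_forall_hom_eq_zero hp hhom, fun y => ⟨fun hy => ?_, ?_⟩⟩
    · exact exists_map_eq_of_ext1VanishesFP hp hF hext y (hc.map_eq_zero_of_comp_eq_zero hy)
    · rintro ⟨x, rfl⟩
      exact hc.map_map_eq_zero x
  · rintro hlex S ⟨Z, Y, X, g, f, hc, p, hp⟩
    exact ⟨hlex.hom_eq_zero hc hp, hlex.ext1VanishesFP hc hp hF⟩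

/-- For an extriangulated category with weak kernels, the perpendicular
category `(def C)^⊥` in `mod C` coincides with the category of left exact
functors. -/
theorem perp_defect_eq_leftExact
    {C : Type u} [Category.{v} C] [Preadditive C] [HasZeroObject C]
    [HasBinaryBiproducts C] (ET : Extriangulated C) (hwk : HasWeakKernels C)
    (F : Mod C) (hF : IsFinitelyPresented F) :
    (∀ S : Mod C, IsDefect ET S → (∀ α : S ⟶ F, α = 0) ∧ Ext1VanishesFP S F) ↔
    IsLeftExact ET F :=
  perp_defect_eq_leftExact_general ET F hF

end PaperStmt

end
end
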